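/- arXiv:2205.02004 — 6 statements merged into one kernel-verified Lean document; each statement's English description precedes it below -/
import Mathlib

section
/- For any graph G with non-backtracking matrix B and any function v on oriented edges, (B*Bv)_{k→l} = (d_l − 2)·(Σ_i a_{il} v_{i→l}) + v_{k→l}, where B* is the conjugate transpose of B, d_l is the degree of l, and a_{il} is the adjacency indicator. -/
open SimpleGraph Matrix

/-- The non-backtracking matrix of a simple graph, indexed by oriented edges (darts). -/
def nbMatrix {V : Type} [Fintype V] [DecidableEq V] (G : SimpleGraph V) [DecidableRel G.Adj] :
    Matrix G.Dart G.Dart ℂ :=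
  fun d e => if e.toProd.2 = d.toProd.1 ∧ e.toProd.1 ≠ d.toProd.2 then 1 else 0

/-- "v into k": the sum of `v` over all oriented edges pointing into `k`. -/
noncomputable def vInto {V : Type} [Fintype V] [DecidableEq V] (G : SimpleGraph V) [DecidableRel G.Adj]
    (v : G.Dart → ℂ) (k : V) : ℂ :=
  ∑ e : G.Dart, if e.toProd.2 = k then v e else 0

/-- "v from k": the sum of `v` over all oriented edges pointing out of `k`. -/
noncomputable def vFrom {V : Type} [Fintype V] [DecidableEq V] (G : SimpleGraph V) [DecidableRel G.Adj]
    (v : G.Dart → ℂ) (k : V) : ℂ :=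
  ∑ e : G.Dart, if e.toProd.1 = k then v e else 0

/-!
Split `B = J - P`, where `J_{f,e} = 1{e ends where f starts}` and `P` is the reversal
permutation `e ↦ e.symm`. In `BᴴB = JᴴJ - JᴴP - PᴴJ + PᴴP`, the `J`-part gives
`d_l · vInto v l` because every dart leaving `l` sees the same incoming sum, each cross term
gives `vInto v l`, and `PᴴP = 1` gives back `v d`.
-/

namespace SimpleGraph.Dart

variable {V : Type} {G : SimpleGraph V}

theorem eq_symm_iff (d e : G.Dart) :
    e = d.symm ↔ e.toProd.1 = d.toProd.2 ∧ e.toProd.2 = d.toProd.1 := by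
  rw [Dart.ext_iff, Prod.ext_iff]
  rfl

end SimpleGraph.Dart

section NonBacktracking

variable {V : Type} [Fintype V] [DecidableEq V] (G : SimpleGraph V) [DecidableRel G.Adj]

theorem nbMatrix_apply (d e : G.Dart) :
    nbMatrix G d e = (if e.toProd.2 = d.toProd.1 then 1 else 0) - if e = d.symm then 1 else 0 := by
  simp only [nbMatrix, Dart.eq_symm_iff]
  by_cases h₂ : e.toProd.2 = d.toProd.1 <;> by_cases h₁ : e.toProd.1 = d.toProd.2 <;>
    simp [h₁, h₂]

theorem vFrom_sub (v w : G.Dart → ℂ) (k : V) :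
    vFrom G (v - w) k = vFrom G v k - vFrom G w k := by
  simp only [vFrom, Pi.sub_apply, ← Finset.sum_sub_distrib, ite_sub_ite, sub_zero]

theorem vFrom_comp_fst (c : V → ℂ) (k : V) :
    vFrom G (fun e => c e.toProd.1) k = G.degree k * c k := by
  rw [vFrom, ← Finset.sum_filter, ← G.dart_fst_fiber_card_eq_degree k, ← nsmul_eq_mul,
    ← Finset.sum_const]
  exact Finset.sum_congr rfl fun e he => by rw [(Finset.mem_filter.mp he).2]

theorem vFrom_comp_symm (v : G.Dart → ℂ) (k : V) :
    vFrom G (fun e => v e.symm) k = vInto G v k :=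
  Fintype.sum_equiv (Dart.symm_involutive.toPerm _) _ _ fun _ => rfl

theorem nbMatrix_mulVec_apply (v : G.Dart → ℂ) (d : G.Dart) :
    (nbMatrix G *ᵥ v) d = vInto G v d.toProd.1 - v d.symm := by
  simp only [mulVec, dotProduct, nbMatrix_apply, sub_mul, Finset.sum_sub_distrib, ite_mul,
    one_mul, zero_mul, Finset.sum_ite_eq', Finset.mem_univ, if_true]
  rfl

theorem conjTranspose_nbMatrix_mulVec_apply (w : G.Dart → ℂ) (d : G.Dart) :
    ((nbMatrix G)ᴴ *ᵥ w) d = vFrom G w d.toProd.2 - w d.symm := by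
  simp only [mulVec, dotProduct, conjTranspose_apply, nbMatrix_apply, star_sub, apply_ite star,
    star_one, star_zero, sub_mul, Finset.sum_sub_distrib, ite_mul, one_mul, zero_mul,
    @eq_comm _ d, Dart.symm_involutive.eq_iff, Finset.sum_ite_eq', Finset.mem_univ, if_true,
    @eq_comm _ d.toProd.2]
  rfl

end NonBacktracking

/-- `(B*Bv)_{k→l} = (d_l − 2)·(v into l) + v_{k→l}`. -/
theorem conjTranspose_mul_nbMatrix_mulVec {V : Type} [Fintype V] [DecidableEq V]
    (G : SimpleGraph V) [DecidableRel G.Adj] (v : G.Dart → ℂ) (d : G.Dart) :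
    (((nbMatrix G)ᴴ * nbMatrix G).mulVec v) d =
      ((G.degree d.toProd.2 : ℂ) - 2) * vInto G v d.toProd.2 + v d := by
  have hBv : nbMatrix G *ᵥ v = (fun e => vInto G v e.toProd.1) - fun e => v e.symm :=
    funext (nbMatrix_mulVec_apply G v)
  rw [← mulVec_mulVec, conjTranspose_nbMatrix_mulVec_apply, hBv, vFrom_sub, vFrom_comp_fst,
    vFrom_comp_symm, Pi.sub_apply, Dart.symm_symm]
  change _ - (vInto G v d.toProd.2 - v d) = _
  ring
end

section
/- If Bv = λv, then for every node k, (d_k − 1)·(Σ_i a_{ik} v_{i→k}) = λ·(Σ_i a_{ik} v_{k→i}). -/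
open SimpleGraph Matrix

/-!
Sum the eigenvalue equation `(Bv)(e) = λ v(e)` over the darts `e` leaving `k`: the right side
becomes `λ · vFrom v k`. On the left, a dart `f` contributes `v f` once for each dart leaving
`k` that continues it without backtracking: none unless `f` ends at `k`, and then exactly
`d_k - 1`, one for every neighbour of `k` except the one `f` came from.
-/

open Finset

namespace SimpleGraph

variable {V : Type} [Fintype V] [DecidableEq V] (G : SimpleGraph V) [DecidableRel G.Adj]

theorem card_dart_fst_eq_and_snd_ne {k u : V} (h : G.Adj k u) :
    #{e : G.Dart | e.fst = k ∧ e.snd ≠ u} = G.degree k - 1 := by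
  have : ({e : G.Dart | e.fst = k ∧ e.snd ≠ u} : Finset G.Dart) =
      ({e : G.Dart | e.fst = k} : Finset G.Dart).erase ⟨(k, u), h⟩ := by
    ext e
    simp only [mem_filter, mem_erase, mem_univ, true_and, ne_eq, Dart.ext_iff, Prod.ext_iff]
    tauto
  rw [this, card_erase_of_mem (by simp), dart_fst_fiber_card_eq_degree]

theorem vFrom_nbMatrix_transpose_apply (f : G.Dart) (k : V) :
    vFrom G ((nbMatrix G)ᵀ f) k = if f.snd = k then (G.degree k : ℂ) - 1 else 0 := by
  simp only [vFrom, transpose_apply]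
  split_ifs with hf
  · have hadj : G.Adj k f.fst := hf ▸ f.adj.symm
    rw [← Nat.cast_pred ((G.degree_pos_iff_exists_adj k).mpr ⟨_, hadj⟩),
      ← G.card_dart_fst_eq_and_snd_ne hadj, natCast_card_filter]
    refine sum_congr rfl fun e _ => ?_
    simp only [nbMatrix, hf]
    split_ifs <;> grind
  · refine sum_eq_zero fun e _ => ?_
    simp only [nbMatrix]
    split_ifs <;> grind

theorem vFrom_smul (c : ℂ) (v : G.Dart → ℂ) (k : V) :
    vFrom G (c • v) k = c * vFrom G v k := by
  simp only [vFrom, mul_sum, Pi.smul_apply, smul_eq_mul, mul_ite, mul_zero]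

theorem vFrom_nbMatrix_mulVec (v : G.Dart → ℂ) (k : V) :
    vFrom G (nbMatrix G *ᵥ v) k = ((G.degree k : ℂ) - 1) * vInto G v k := by
  calc vFrom G (nbMatrix G *ᵥ v) k
      = ∑ f, vFrom G ((nbMatrix G)ᵀ f) k * v f := by
        simp only [vFrom, transpose_apply, mulVec, dotProduct, ite_sum_zero, sum_mul, ite_mul,
          zero_mul]
        exact sum_comm
    _ = ((G.degree k : ℂ) - 1) * vInto G v k := by
        simp only [vFrom_nbMatrix_transpose_apply, vInto, mul_sum, ite_mul, zero_mul, mul_ite,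
          mul_zero]

end SimpleGraph

/-- If `Bv = λv` then `(d_k − 1)·(v into k) = λ·(v from k)` for every node k. -/
theorem degree_sub_one_mul_vInto {V : Type} [Fintype V] [DecidableEq V]
    (G : SimpleGraph V) [DecidableRel G.Adj] (v : G.Dart → ℂ) (lam : ℂ)
    (hv : (nbMatrix G).mulVec v = lam • v) (k : V) :
    ((G.degree k : ℂ) - 1) * vInto G v k = lam * vFrom G v k := by
  rw [← G.vFrom_nbMatrix_mulVec, hv, G.vFrom_smul]
end

section
/- Let G be a connected graph with minimum degree at least 2 and m > n. If Bv = v for the non-backtracking matrix B, then for every node k, Σ_i a_{ik} v_{i→k} = 0, and for every edge k−l, v_{k→l} + v_{l→k} = 0. -/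
/-!
Splitting off the reversed dart, the fixed-point equation reads `v d + v d.symm = S (d.fst)`, where
`S k` is the total weight of the darts entering `k`. Reading this on both orientations of an edge
shows that `S` takes the same value on adjacent vertices, hence is a constant `c` on a connected
graph. Summing `S` over the vertices counts every dart once, giving `n c = ∑ v`, while summing the
identity over the darts gives `2 m c = 2 ∑ v`. Hence `(n - m) c = 0`, and `n ≠ m` forces `c = 0`.
-/

open SimpleGraph Matrix

open Finset

namespace SimpleGraph

variable {V : Type} {G : SimpleGraph V}

theorem Preconnected.eq_of_forall_adj_eq {α : Type} (hG : G.Preconnected) {f : V → α}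
    (hf : ∀ ⦃x y⦄, G.Adj x y → f x = f y) (x y : V) : f x = f y := by
  obtain ⟨w⟩ := hG x y
  induction w with
  | nil => rfl
  | cons h _ ih => exact (hf h).trans ih

variable [Fintype V] [DecidableEq V] [DecidableRel G.Adj]

/-- The total weight `∑ᵢ aᵢₖ v_{i→k}` of the darts entering `k`. -/
def dartInflow {M : Type} [AddCommMonoid M] (v : G.Dart → M) (k : V) : M :=
  ∑ e : G.Dart, if e.toProd.2 = k then v e else 0

theorem sum_dartInflow {M : Type} [AddCommMonoid M] (v : G.Dart → M) :
    ∑ k, dartInflow v k = ∑ d, v d := by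
  simp only [dartInflow]
  rw [sum_comm]
  simp

omit [DecidableEq V] in
theorem sum_dart_symm {M : Type} [AddCommMonoid M] (v : G.Dart → M) :
    ∑ d : G.Dart, v d.symm = ∑ d, v d :=
  Fintype.sum_bijective _ Dart.symm_involutive.bijective _ _ fun _ => rfl

theorem dartInflow_eq_add_symm {M : Type} [AddCommMonoid M] (v : G.Dart → M) (d : G.Dart) :
    dartInflow v d.fst =
      (∑ e : G.Dart, if e.snd = d.fst ∧ e.fst ≠ d.snd then v e else 0) + v d.symm := by
  have hsplit : ∀ e : G.Dart, (if e.snd = d.fst then v e else 0) =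
      (if e.snd = d.fst ∧ e.fst ≠ d.snd then v e else 0) + if e = d.symm then v e else 0 := by
    intro e
    by_cases he : e = d.symm
    · subst he
      simp
    · have hnot_symm : ¬(e.snd = d.fst ∧ e.fst = d.snd) := fun h =>
        he (Dart.ext _ _ (Prod.ext h.2 h.1))
      by_cases h1 : e.snd = d.fst <;> simp_all
  rw [dartInflow, sum_congr rfl fun e _ => hsplit e, sum_add_distrib,
    sum_ite_eq' univ d.symm v, if_pos (mem_univ _)]

theorem eq_zero_of_add_symm_eq_of_dartInflow_eq {K : Type} [Field K] [CharZero K]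
    {v : G.Dart → K} {c : K} (hsymm : ∀ d, v d + v d.symm = c) (hinflow : ∀ k, dartInflow v k = c)
    (hcard : Fintype.card V ≠ #G.edgeFinset) : c = 0 := by
  have hvertices : (Fintype.card V : K) * c = ∑ d, v d := by
    simp [← sum_dartInflow v, hinflow]
  have hdarts : (2 * #G.edgeFinset : K) * c = 2 * ∑ d, v d :=
    calc (2 * #G.edgeFinset : K) * c = ∑ _d : G.Dart, c := by
          simp [dart_card_eq_twice_card_edges]
      _ = ∑ d, (v d + v d.symm) := by simp only [hsymm]
      _ = 2 * ∑ d, v d := by rw [sum_add_distrib, sum_dart_symm, two_mul]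
  have hsub : ((Fintype.card V : K) - #G.edgeFinset) * c = 0 := by
    linear_combination hvertices - hdarts / 2
  exact (mul_eq_zero.mp hsub).resolve_left (sub_ne_zero.mpr (by exact_mod_cast hcard))

theorem nbMatrix_mulVec_apply (v : G.Dart → ℂ) (d : G.Dart) :
    (nbMatrix G *ᵥ v) d = dartInflow v d.fst - v d.symm := by
  rw [dartInflow_eq_add_symm, add_sub_cancel_right]
  simp only [mulVec, dotProduct, nbMatrix, ite_mul, one_mul, zero_mul]

theorem add_symm_eq_dartInflow_of_mulVec_eq {v : G.Dart → ℂ} (hv : nbMatrix G *ᵥ v = v)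
    (d : G.Dart) : v d + v d.symm = dartInflow v d.fst := by
  have := congrFun hv d
  rw [nbMatrix_mulVec_apply] at this
  linear_combination -this

theorem dartInflow_eq_of_adj_of_mulVec_eq {v : G.Dart → ℂ} (hv : nbMatrix G *ᵥ v = v)
    {x y : V} (h : G.Adj x y) : dartInflow v x = dartInflow v y := by
  let d : G.Dart := ⟨(x, y), h⟩
  rw [← add_symm_eq_dartInflow_of_mulVec_eq hv d,
    show y = d.symm.fst from rfl, ← add_symm_eq_dartInflow_of_mulVec_eq hv d.symm,
    Dart.symm_symm, add_comm]

end SimpleGraph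

theorem fixed_vector_system_general {V : Type} [Fintype V] [DecidableEq V]
    (G : SimpleGraph V) [DecidableRel G.Adj]
    (hconn : G.Connected)
    (hmn : Fintype.card V < G.edgeFinset.card)
    (v : G.Dart → ℂ) (hv : (nbMatrix G).mulVec v = v) :
    (∀ k : V, (∑ e : G.Dart, if e.toProd.2 = k then v e else 0) = 0) ∧
    (∀ d : G.Dart, v d + v d.symm = 0) := by
  obtain ⟨x₀⟩ := hconn.nonempty
  have hconst : ∀ x, dartInflow v x = dartInflow v x₀ := fun x =>
    hconn.preconnected.eq_of_forall_adj_eq (fun _ _ => dartInflow_eq_of_adj_of_mulVec_eq hv) x x₀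
  have hsymm : ∀ d, v d + v d.symm = dartInflow v x₀ := fun d =>
    (add_symm_eq_dartInflow_of_mulVec_eq hv d).trans (hconst _)
  have hzero := eq_zero_of_add_symm_eq_of_dartInflow_eq hsymm hconst hmn.ne
  exact ⟨fun k => (hconst k).trans hzero, fun d => (hsymm d).trans hzero⟩

/-- If Bv = v in a connected graph with minimum degree ≥ 2 and m > n, then the sum of v
into every node vanishes and v is antisymmetric on every edge. -/
theorem fixed_vector_system {V : Type} [Fintype V] [DecidableEq V]
    (G : SimpleGraph V) [DecidableRel G.Adj]
    (hconn : G.Connected) (hmin : ∀ x : V, 2 ≤ G.degree x)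
    (hmn : Fintype.card V < G.edgeFinset.card)
    (v : G.Dart → ℂ) (hv : (nbMatrix G).mulVec v = v) :
    (∀ k : V, (∑ e : G.Dart, if e.toProd.2 = k then v e else 0) = 0) ∧
    (∀ d : G.Dart, v d + v d.symm = 0) :=
  fixed_vector_system_general G hconn hmn v hv
end

section
/- Let C = (w, x, y, z) be a cycle of length 4 in a graph G. The symmetric vector v with v_{w→x} = v_{x→w} = v_{y→z} = v_{z→y} = 1, v_{x→y} = v_{y→x} = v_{z→w} = v_{w→z} = −1, and 0 elsewhere satisfies Bv = −v. More generally, for any even-length cycle, the alternating symmetric cycle vector is an eigenfunction of B with eigenvalue −1. -/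
open SimpleGraph Matrix

/-- The alternating symmetric vector of an even cycle `c 0, c 1, …, c (2s) = c 0`:
it assigns `(−1)^i` to both orientations of the edge `c i − c (i+1)` and 0 elsewhere. -/
noncomputable def altCycleVec {V : Type} [Fintype V] [DecidableEq V]
    (G : SimpleGraph V) [DecidableRel G.Adj] (s : ℕ) (c : ℕ → V) : G.Dart → ℂ :=
  fun d => ∑ i ∈ Finset.range (2 * s),
    if d.toProd = (c i, c (i + 1)) ∨ d.toProd = (c (i + 1), c i) then (-1 : ℂ) ^ i else 0

/-!
Write `out x` for the indicator of the darts leaving `x`. `B` sends the indicator of a dart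
`u → v` to `out v` minus the indicator of `v → u`, so it maps the symmetric vector of an edge
`{u, v}` to `out u + out v` minus that vector. Summed with alternating signs along a closed walk
of even length, the terms `out (c i) + out (c (i + 1))` telescope to zero, leaving `B v = -v`.
-/

theorem Finset.sum_range_neg_one_pow_smul_add_succ {R M : Type*} [Ring R] [AddCommGroup M]
    [Module R M] (f : ℕ → M) (n : ℕ) :
    ∑ i ∈ range n, (-1 : R) ^ i • (f i + f (i + 1)) = f 0 - (-1 : R) ^ n • f n := by
  convert sum_range_sub' (fun i ↦ (-1 : R) ^ i • f i) n using 1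
  · refine sum_congr rfl fun i _ ↦ ?_
    simp [pow_succ, smul_add, sub_eq_add_neg]
  · simp

section

variable {V : Type} [DecidableEq V] {G : SimpleGraph V}

def dartsFromVec (x : V) : G.Dart → ℂ := fun d ↦ if d.fst = x then 1 else 0

def symmDartVec (e : G.Dart) : G.Dart → ℂ := Pi.single e 1 + Pi.single e.symm 1

variable [Fintype V] [DecidableRel G.Adj]

theorem nbMatrix_mulVec_single (e : G.Dart) :
    nbMatrix G *ᵥ Pi.single e 1 = dartsFromVec e.snd - Pi.single e.symm 1 := by
  ext d
  rw [mulVec_single_one]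
  by_cases h : d = e.symm
  · subst h; simp [nbMatrix, dartsFromVec]
  · have hne : d.fst = e.snd → e.fst ≠ d.snd := fun h₁ h₂ ↦ h (Dart.ext _ _ (Prod.ext h₁ h₂.symm))
    by_cases h₁ : d.fst = e.snd <;> simp [nbMatrix, dartsFromVec, h, h₁, hne, eq_comm]

theorem nbMatrix_mulVec_symmDartVec (e : G.Dart) :
    nbMatrix G *ᵥ symmDartVec e = dartsFromVec e.fst + dartsFromVec e.snd - symmDartVec e := by
  rw [symmDartVec, mulVec_add, nbMatrix_mulVec_single, nbMatrix_mulVec_single]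
  simp only [Dart.symm_toProd, Prod.snd_swap, Dart.symm_symm]
  abel

theorem altCycleVec_eq_sum (s : ℕ) (c : ℕ → V) (hadj : ∀ i, G.Adj (c i) (c (i + 1))) :
    altCycleVec G s c =
      ∑ i ∈ Finset.range (2 * s), (-1 : ℂ) ^ i • symmDartVec ⟨(c i, c (i + 1)), hadj i⟩ := by
  ext d
  simp only [altCycleVec, Finset.sum_apply]
  refine Finset.sum_congr rfl fun i _ ↦ ?_
  have hne : (c i, c (i + 1)) ≠ (c (i + 1), c i) := fun h ↦ (hadj i).ne (congrArg Prod.fst h)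
  by_cases h : d.toProd = (c i, c (i + 1)) <;>
    simp [symmDartVec, Pi.single_apply, Dart.ext_iff, h, hne]

end

theorem altCycleVec_eigen_neg_one_general {V : Type} [Fintype V] [DecidableEq V]
    (G : SimpleGraph V) [DecidableRel G.Adj] (s : ℕ) (c : ℕ → V)
    (hper : ∀ i, c (i + 2 * s) = c i)
    (hadj : ∀ i, G.Adj (c i) (c (i + 1))) :
    (nbMatrix G).mulVec (altCycleVec G s c) = (-1 : ℂ) • altCycleVec G s c := by
  have hclosed : c (2 * s) = c 0 := by simpa using hper 0
  calc nbMatrix G *ᵥ altCycleVec G s c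
      = ∑ i ∈ Finset.range (2 * s), (-1 : ℂ) ^ i • (dartsFromVec (c i) + dartsFromVec (c (i + 1)))
          - altCycleVec G s c := by
        rw [altCycleVec_eq_sum s c hadj]
        simp only [mulVec_sum, mulVec_smul, nbMatrix_mulVec_symmDartVec, smul_sub,
          Finset.sum_sub_distrib]
    _ = dartsFromVec (c 0) - (-1 : ℂ) ^ (2 * s) • dartsFromVec (c (2 * s)) - altCycleVec G s c := by
        rw [Finset.sum_range_neg_one_pow_smul_add_succ]
    _ = (-1 : ℂ) • altCycleVec G s c := by
        simp [hclosed, pow_mul]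

/-- For any even-length cycle (in particular a 4-cycle `(w,x,y,z)`), the alternating
symmetric cycle vector is an eigenfunction of the non-backtracking matrix with
eigenvalue −1. -/
theorem altCycleVec_eigen_neg_one {V : Type} [Fintype V] [DecidableEq V]
    (G : SimpleGraph V) [DecidableRel G.Adj] (s : ℕ) (hs : 2 ≤ s) (c : ℕ → V)
    (hper : ∀ i, c (i + 2 * s) = c i)
    (hinj : ∀ i < 2 * s, ∀ j < 2 * s, c i = c j → i = j)
    (hadj : ∀ i, G.Adj (c i) (c (i + 1))) :
    (nbMatrix G).mulVec (altCycleVec G s c) = (-1 : ℂ) • altCycleVec G s c :=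
  altCycleVec_eigen_neg_one_general G s c hper hadj
end

section
/- Let G be a graph with no nodes of degree 1, and let v be an eigenfunction of the non-backtracking matrix B with nonzero eigenvalue λ. Then the subgraph induced by the support of v has no nodes of degree 1. -/
/-!
Write `(B v)(a → b) = ∑_{c ∼ a, c ≠ b} v(c → a)`. If `y` were the only support neighbour
of `x`, every dart into `x` except `y → x` would vanish. Evaluating `B v = λ v` at `x → z`
for a second neighbour `z` of `x` gives `0 = v(y → x)`, and at `x → y` gives
`λ v(x → y) = 0`; so the edge `x − y` is not in the support after all.
-/

open SimpleGraph Matrix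

open Finset

namespace SimpleGraph

variable {V : Type} {G : SimpleGraph V}

def supportNeighbors (v : G.Dart → ℂ) (x : V) : Set V :=
  {y : V | ∃ d : G.Dart, d.toProd = (x, y) ∧ (v d ≠ 0 ∨ v d.symm ≠ 0)}

theorem apply_eq_zero_of_snd_notMem_supportNeighbors {v : G.Dart → ℂ} {d : G.Dart}
    (hd : d.snd ∉ supportNeighbors v d.fst) : v d = 0 ∧ v d.symm = 0 := by
  by_contra h
  exact hd ⟨d, rfl, not_and_or.mp h⟩

variable [Fintype V] [DecidableEq V] [DecidableRel G.Adj]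

theorem nbMatrix_mulVec_apply_s11 (v : G.Dart → ℂ) (d : G.Dart) :
    (nbMatrix G *ᵥ v) d =
      ∑ e ∈ univ.filter (fun e : G.Dart => e.snd = d.fst ∧ e.fst ≠ d.snd), v e := by
  simp only [mulVec, dotProduct, nbMatrix, ite_mul, one_mul, zero_mul, sum_filter]

theorem nbMatrix_mulVec_apply_eq_zero {v : G.Dart → ℂ} {d : G.Dart}
    (h : ∀ e : G.Dart, e.snd = d.fst → e.fst ≠ d.snd → v e = 0) :
    (nbMatrix G *ᵥ v) d = 0 := by
  rw [nbMatrix_mulVec_apply_s11]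
  exact sum_eq_zero fun e he => h e (mem_filter.mp he).2.1 (mem_filter.mp he).2.2

theorem nbMatrix_mulVec_apply_eq_of_single {v : G.Dart → ℂ} {d e₀ : G.Dart}
    (he₀ : e₀.snd = d.fst) (hne : e₀.fst ≠ d.snd)
    (h : ∀ e : G.Dart, e.snd = d.fst → e.fst ≠ e₀.fst → v e = 0) :
    (nbMatrix G *ᵥ v) d = v e₀ := by
  rw [nbMatrix_mulVec_apply_s11, sum_eq_single_of_mem e₀ (by simp [he₀, hne])]
  intro e he hee₀
  refine h e (mem_filter.mp he).2.1 fun hfst => hee₀ (Dart.ext _ _ ?_)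
  exact Prod.ext hfst ((mem_filter.mp he).2.1.trans he₀.symm)

end SimpleGraph

theorem support_no_degree_one_general {V : Type} [Fintype V] [DecidableEq V]
    (G : SimpleGraph V) [DecidableRel G.Adj]
    (hmin : ∀ x : V, 2 ≤ G.degree x)
    (v : G.Dart → ℂ) (lam : ℂ) (hlam : lam ≠ 0)
    (hv : (nbMatrix G).mulVec v = lam • v) (x : V) :
    {y : V | ∃ d : G.Dart, d.toProd = (x, y) ∧ (v d ≠ 0 ∨ v d.symm ≠ 0)}.ncard ≠ 1 := by
  change (supportNeighbors v x).ncard ≠ 1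
  intro hcard
  obtain ⟨y, hS⟩ := Set.ncard_eq_one.mp hcard
  obtain ⟨dxy, hdxy, hdxy_ne⟩ : y ∈ supportNeighbors v x := hS ▸ rfl
  have hin : ∀ e : G.Dart, e.snd = x → e.fst ≠ y → v e = 0 := by
    intro e hsnd hfst
    simpa using (apply_eq_zero_of_snd_notMem_supportNeighbors (v := v) (d := e.symm)
      (by simpa [hsnd, hS])).2
  obtain ⟨z, hz, hzy⟩ := exists_mem_ne (one_lt_two.trans_le (hmin x)) y
  let dxz : G.Dart := ⟨(x, z), (mem_neighborFinset G x z).mp hz⟩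
  have hyx : v dxy.symm = 0 := by
    have hxz : v dxz = 0 :=
      (apply_eq_zero_of_snd_notMem_supportNeighbors (v := v) (d := dxz) (by simpa [dxz, hS])).1
    have := congrFun hv dxz
    rwa [nbMatrix_mulVec_apply_eq_of_single (e₀ := dxy.symm) (by simp [hdxy, dxz])
      (by simpa [hdxy, dxz] using hzy.symm) (by simpa [hdxy] using hin),
      Pi.smul_apply, hxz, smul_zero] at this
  have hxy : v dxy = 0 := by
    have := congrFun hv dxy
    rw [nbMatrix_mulVec_apply_eq_zero (by simpa [hdxy] using hin), Pi.smul_apply, eq_comm,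
      smul_eq_zero] at this
    exact this.resolve_left hlam
  exact hdxy_ne.elim (· hxy) (· hyx)

/-- If G has minimum degree ≥ 2 and v is an eigenfunction of B with nonzero eigenvalue,
then the subgraph induced by the support of v has no nodes of degree 1: for every node x,
the number of neighbors of x in the support subgraph is not 1. -/
theorem support_no_degree_one {V : Type} [Fintype V] [DecidableEq V]
    (G : SimpleGraph V) [DecidableRel G.Adj]
    (hmin : ∀ x : V, 2 ≤ G.degree x)
    (v : G.Dart → ℂ) (lam : ℂ) (hlam : lam ≠ 0) (hv0 : v ≠ 0)
    (hv : (nbMatrix G).mulVec v = lam • v) (x : V) :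
    {y : V | ∃ d : G.Dart, d.toProd = (x, y) ∧ (v d ≠ 0 ∨ v d.symm ≠ 0)}.ncard ≠ 1 :=
  support_no_degree_one_general G hmin v lam hlam hv x
end

section
/- If H is the r-subdivision of G, then det(tI − B_H) = det(t^r I − B_G), where B_H and B_G are the respective non-backtracking matrices. In particular, the non-backtracking eigenvalues of H are exactly the r-th roots of the non-backtracking eigenvalues of G, counted with algebraic multiplicity. -/
/-!
Number the darts of the subdivision `H` by pairs `(d, k)`: the `k`-th segment, `k < r`, of the path
that replaces the dart `d` of `G`. Leaving segment `k - 1` of `d` without backtracking one can only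
enter segment `k` of `d`, and leaving the last segment of `e` one enters the first segment of
exactly those `d` that follow `e` without backtracking in `G`. So in this numbering `B_H` is the
block companion matrix of `X ^ r - B_G`, and splitting off one block row at a time by Schur
complements gives `det (t - B_H) = det (t ^ r - B_G)` for every `t ≠ 0`.
-/

open SimpleGraph Matrix

/-- The `r`-subdivision of a simple graph `G`: each edge `e` of `G`, with endpoints
`(Quot.out e).1` and `(Quot.out e).2`, is replaced by the path
`(Quot.out e).1, (e,0), (e,1), …, (e,r-2), (Quot.out e).2` through `r − 1` new
degree-2 nodes. (For `r = 1` the subdivision is `G` itself.) -/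
def subdiv {V : Type} [Fintype V] [DecidableEq V] (G : SimpleGraph V) (r : ℕ) :
    SimpleGraph (V ⊕ (G.edgeSet × Fin (r - 1))) where
  Adj x y :=
    match x, y with
    | Sum.inl a, Sum.inl b => r = 1 ∧ G.Adj a b
    | Sum.inl a, Sum.inr (e, i) =>
        (a = (Quot.out (e : Sym2 V)).1 ∧ (i : ℕ) = 0) ∨
          (a = (Quot.out (e : Sym2 V)).2 ∧ (i : ℕ) = r - 2)
    | Sum.inr (e, i), Sum.inl b =>
        (b = (Quot.out (e : Sym2 V)).1 ∧ (i : ℕ) = 0) ∨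
          (b = (Quot.out (e : Sym2 V)).2 ∧ (i : ℕ) = r - 2)
    | Sum.inr (e, i), Sum.inr (f, j) => e = f ∧ ((i : ℕ) + 1 = (j : ℕ) ∨ (j : ℕ) + 1 = (i : ℕ))
  symm := by
    constructor
    intro x y h
    rcases x with a | ⟨e, i⟩ <;> rcases y with b | ⟨f, j⟩ <;> simp_all
    · exact h.2.symm
    · tauto
  loopless := by
    constructor
    intro x h
    rcases x with a | ⟨e, i⟩
    · exact G.loopless.irrefl a h.2
    · rcases h with ⟨-, h | h⟩ <;> omega

noncomputable instance subdivAdjDec {V : Type} [Fintype V] [DecidableEq V] (G : SimpleGraph V)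
    (r : ℕ) : DecidableRel (subdiv G r).Adj := fun _ _ => Classical.propDecidable _

open Sum Polynomial

def sumProdFinSuccEquiv (n : Type*) (r : ℕ) : n ⊕ n × Fin r ≃ n × Fin (r + 1) where
  toFun := Sum.elim (fun d => (d, 0)) fun p => (p.1, p.2.succ)
  invFun p := Fin.cases (inl p.1) (fun i => inr (p.1, i)) p.2
  left_inv := by rintro (d | ⟨d, i⟩) <;> simp
  right_inv := by rintro ⟨d, i⟩; cases i using Fin.cases <;> simp

namespace Matrix

variable {n : Type*} [DecidableEq n]

/-- The companion matrix of `X ^ r - B` with blocks of size `n`: identity blocks below the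
diagonal and `B` in the top right corner. -/
def blockCompanion {R : Type*} [AddMonoidWithOne R] (B : Matrix n n R) (r : ℕ) :
    Matrix (n × Fin r) (n × Fin r) R :=
  of fun p q => (if p.1 = q.1 ∧ (q.2 : ℕ) + 1 = p.2 then 1 else 0) +
    if (p.2 : ℕ) = 0 ∧ (q.2 : ℕ) + 1 = r then B p.1 q.1 else 0

variable {K : Type*} [Field K] [Fintype n]

lemma det_scalar_sub_blockCompanion_one (B : Matrix n n K) (t : K) :
    (scalar (n × Fin 1) t - blockCompanion B 1).det = (scalar n t - B).det := by
  rw [← det_submatrix_equiv_self (Equiv.prodUnique n (Fin 1)).symm]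
  congr 1
  ext d e
  simp [blockCompanion, scalar_apply, diagonal_apply, Prod.ext_iff]

lemma det_scalar_sub_blockCompanion_succ (B : Matrix n n K) {r : ℕ} (hr : 0 < r) {t : K}
    (ht : t ≠ 0) :
    (scalar (n × Fin (r + 1)) t - blockCompanion B (r + 1)).det =
      t ^ Fintype.card n * (scalar (n × Fin r) t - blockCompanion (t⁻¹ • B) r).det := by
  let _ : Invertible (scalar n t) := (invertibleOfNonzero ht).map (scalar n)
  set Q : Matrix (n × Fin r) n K := of fun p e => if p.1 = e ∧ (p.2 : ℕ) = 0 then 1 else 0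
  set P : Matrix n (n × Fin r) K := of fun d q => if (q.2 : ℕ) + 1 = r then B d q.1 else 0
  have hblocks : (scalar _ t - blockCompanion B (r + 1)).submatrix (sumProdFinSuccEquiv n r)
      (sumProdFinSuccEquiv n r) =
        fromBlocks (scalar n t) (-P) (-Q) (scalar _ t - blockCompanion 0 r) := by
    ext (d | ⟨d, i⟩) (e | ⟨e, j⟩) <;>
      simp only [submatrix_apply, fromBlocks_apply₁₁, fromBlocks_apply₁₂, fromBlocks_apply₂₁,
        fromBlocks_apply₂₂, sumProdFinSuccEquiv, Equiv.coe_fn_mk, elim_inl, elim_inr, sub_apply,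
        neg_apply, zero_apply, scalar_apply, diagonal_apply, blockCompanion, of_apply, P, Q,
        Prod.mk.injEq, Fin.ext_iff, Fin.val_zero, Fin.val_succ] <;>
      split_ifs <;> first | (exfalso; omega) | simp_all
  have hschur : scalar _ t - blockCompanion 0 r - -Q * ⅟(scalar n t) * -P =
      scalar _ t - blockCompanion (t⁻¹ • B) r := by
    rw [Matrix.neg_mul, Matrix.mul_neg, Matrix.neg_mul, neg_neg,
      show ⅟(scalar n t) = scalar n t⁻¹ from rfl]
    ext ⟨d, i⟩ ⟨e, j⟩
    simp only [scalar_apply, blockCompanion, ite_and, zero_apply, ite_self, add_zero, sub_apply,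
      diagonal_apply, Prod.mk.injEq, of_apply, mul_apply, mul_ite, ite_mul, one_mul, zero_mul,
      mul_zero, Finset.sum_ite_eq', Finset.mem_univ, ↓reduceIte, Finset.sum_ite_irrel,
      Finset.sum_ite_eq, Finset.sum_const_zero, smul_apply, smul_eq_mul, Q, P]
    split_ifs <;> simp_all
  rw [← det_submatrix_equiv_self (sumProdFinSuccEquiv n r), hblocks, det_fromBlocks₁₁, hschur,
    scalar_apply, det_diagonal, Finset.prod_const, Finset.card_univ]

lemma det_scalar_sub_blockCompanion (B : Matrix n n K) {r : ℕ} (hr : 0 < r) {t : K}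
    (ht : t ≠ 0) :
    (scalar (n × Fin r) t - blockCompanion B r).det = (scalar n (t ^ r) - B).det := by
  induction r, hr using Nat.le_induction generalizing B with
  | base => rw [det_scalar_sub_blockCompanion_one, pow_one]
  | succ r hr ih =>
    rw [det_scalar_sub_blockCompanion_succ B hr ht, ih, ← det_smul, smul_sub, smul_smul,
      mul_inv_cancel₀ ht, one_smul, scalar_apply, scalar_apply, ← diagonal_smul, pow_succ']
    rfl

theorem charpoly_blockCompanion [Infinite K] (B : Matrix n n K) {r : ℕ} (hr : 0 < r) :
    (blockCompanion B r).charpoly = B.charpoly.comp (X ^ r) := by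
  refine eq_of_infinite_eval_eq _ _ (Set.Infinite.mono (fun t (ht : t ≠ 0) => ?_)
    (Set.finite_singleton 0).infinite_compl)
  simp only [Set.mem_ofPred_eq, eval_comp, eval_pow, eval_X, eval_charpoly]
  exact det_scalar_sub_blockCompanion B hr ht

end Matrix

section Path

variable {V : Type*} {G : SimpleGraph V}

/-- The orientation of `e` in which `subdiv` numbers the nodes it inserts on `e`. -/
noncomputable def edgeDart (e : G.edgeSet) : G.Dart :=
  ⟨Quot.out (e : Sym2 V), by rw [← mem_edgeSet, Sym2.mk, Quot.out_eq]; exact e.2⟩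

lemma edgeDart_toProd (e : G.edgeSet) : (edgeDart e).toProd = Quot.out (e : Sym2 V) := rfl

def dartEdge (d : G.Dart) : G.edgeSet := ⟨d.edge, d.edge_mem⟩

lemma dartEdge_edgeDart (e : G.edgeSet) : dartEdge (edgeDart e) = e :=
  Subtype.ext (Quot.out_eq _)

lemma eq_edgeDart_or_eq_symm (d : G.Dart) :
    d = edgeDart (dartEdge d) ∨ d = (edgeDart (dartEdge d)).symm :=
  (dart_edge_eq_iff _ _).1 (congrArg Subtype.val (dartEdge_edgeDart (dartEdge d)).symm)

lemma exists_eq_edgeDart (d : G.Dart) : ∃ e, d = edgeDart e ∨ d = (edgeDart e).symm :=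
  ⟨dartEdge d, eq_edgeDart_or_eq_symm d⟩

/-- The `k`-th node, `0 ≤ k ≤ r`, of the path replacing `e` in `subdiv G r`, counted from the
endpoint `(edgeDart e).fst`. -/
noncomputable def edgeNode (r : ℕ) (e : G.edgeSet) (k : ℕ) : V ⊕ (G.edgeSet × Fin (r - 1)) :=
  if h0 : k = 0 then inl (edgeDart e).fst
  else if h : k < r then inr (e, ⟨k - 1, by omega⟩) else inl (edgeDart e).snd

variable {r : ℕ}

lemma edgeNode_zero (e : G.edgeSet) : edgeNode r e 0 = inl (edgeDart e).fst := dif_pos rfl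

lemma edgeNode_self (hr : 0 < r) (e : G.edgeSet) : edgeNode r e r = inl (edgeDart e).snd := by
  simp [edgeNode, hr.ne']

lemma edgeNode_succ (e : G.edgeSet) (i : Fin (r - 1)) : edgeNode r e (i + 1) = inr (e, i) := by
  simp [edgeNode, show (i : ℕ) + 1 < r by omega]

lemma edgeNode_eq_of_pos_of_lt {e f : G.edgeSet} {k l : ℕ} (h0 : 0 < k) (hk : k < r)
    (h : edgeNode r f l = edgeNode r e k) : f = e ∧ l = k := by
  unfold edgeNode at h
  split_ifs at h <;> simp_all [Fin.ext_iff]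
  omega

lemma edgeNode_injOn (e : G.edgeSet) : Set.InjOn (edgeNode r e) (Set.Iic r) := by
  intro k hk l hl h
  simp only [Set.mem_Iic] at hk hl
  unfold edgeNode at h
  split_ifs at h <;> simp_all [Fin.ext_iff] <;> omega

variable [DecidableEq V] (r) in
/-- The same path, traversed in the direction of `d`. -/
noncomputable def dartNode (d : G.Dart) (k : ℕ) : V ⊕ (G.edgeSet × Fin (r - 1)) :=
  edgeNode r (dartEdge d) (if d.fst = (edgeDart (dartEdge d)).fst then k else r - k)

variable [DecidableEq V]

lemma dartNode_edgeDart (e : G.edgeSet) (k : ℕ) : dartNode r (edgeDart e) k = edgeNode r e k := by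
  simp [dartNode, dartEdge_edgeDart]

lemma dartNode_edgeDart_symm (e : G.edgeSet) (k : ℕ) :
    dartNode r (edgeDart e).symm k = edgeNode r e (r - k) := by
  have : dartEdge (edgeDart e).symm = e :=
    (Subtype.ext (edgeDart e).edge_symm).trans (dartEdge_edgeDart e)
  simp [dartNode, this, (edgeDart e).snd_ne_fst]

lemma dartNode_zero (hr : 0 < r) (d : G.Dart) : dartNode r d 0 = inl d.fst := by
  obtain ⟨e, rfl | rfl⟩ := exists_eq_edgeDart d
  · rw [dartNode_edgeDart, edgeNode_zero]
  · rw [dartNode_edgeDart_symm, Nat.sub_zero, edgeNode_self hr]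
    rfl

lemma dartNode_self (hr : 0 < r) (d : G.Dart) : dartNode r d r = inl d.snd := by
  obtain ⟨e, rfl | rfl⟩ := exists_eq_edgeDart d
  · rw [dartNode_edgeDart, edgeNode_self hr]
  · rw [dartNode_edgeDart_symm, Nat.sub_self, edgeNode_zero]
    rfl

lemma dartNode_symm (d : G.Dart) {k : ℕ} (hk : k ≤ r) :
    dartNode r d.symm k = dartNode r d (r - k) := by
  obtain ⟨e, rfl | rfl⟩ := exists_eq_edgeDart d
  · rw [dartNode_edgeDart_symm, dartNode_edgeDart]
  · rw [Dart.symm_symm, dartNode_edgeDart_symm, dartNode_edgeDart, Nat.sub_sub_self hk]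

lemma dartNode_injOn (d : G.Dart) : Set.InjOn (dartNode r d) (Set.Iic r) := by
  intro k hk l hl h
  obtain ⟨e, rfl | rfl⟩ := exists_eq_edgeDart d
  · rw [dartNode_edgeDart, dartNode_edgeDart] at h
    exact edgeNode_injOn e hk hl h
  · rw [dartNode_edgeDart_symm, dartNode_edgeDart_symm] at h
    have := edgeNode_injOn e (Nat.sub_le r k) (Nat.sub_le r l) h
    simp only [Set.mem_Iic] at hk hl
    omega

lemma dartNode_eq_iff {d d' : G.Dart} {k l : ℕ} (h0 : 0 < k) (hk : k < r) (hl : l ≤ r) :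
    dartNode r d' l = dartNode r d k ↔ d' = d ∧ l = k ∨ d' = d.symm ∧ l = r - k := by
  constructor
  · intro h
    obtain ⟨e, rfl | rfl⟩ := exists_eq_edgeDart d <;>
      obtain ⟨f, rfl | rfl⟩ := exists_eq_edgeDart d' <;>
      simp only [dartNode_edgeDart, dartNode_edgeDart_symm] at h <;>
      obtain ⟨rfl, hlk⟩ := edgeNode_eq_of_pos_of_lt (by omega) (by omega) h <;> simp <;> omega
  · rintro (⟨rfl, rfl⟩ | ⟨rfl, rfl⟩)
    · rfl
    · rw [dartNode_symm d (Nat.sub_le r k), Nat.sub_sub_self hk.le]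

end Path

section Subdiv

variable {V : Type} [Fintype V] [DecidableEq V] {G : SimpleGraph V} {r : ℕ}

lemma subdiv_adj_edgeNode (e : G.edgeSet) {k : ℕ} (hk : k < r) :
    (subdiv G r).Adj (edgeNode r e k) (edgeNode r e (k + 1)) := by
  unfold edgeNode
  split_ifs <;> simp_all [subdiv, edgeDart_toProd]
  exacts [⟨by omega, (edgeDart e).adj⟩, by omega, Or.inr (by omega)]

lemma exists_edgeNode_of_subdiv_adj {x y : V ⊕ (G.edgeSet × Fin (r - 1))}
    (h : (subdiv G r).Adj x y) : ∃ e k, k < r ∧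
      (x = edgeNode r e k ∧ y = edgeNode r e (k + 1) ∨
        x = edgeNode r e (k + 1) ∧ y = edgeNode r e k) := by
  wlog hxy : ¬ (x.isRight ∧ y.isLeft) generalizing x y
  · obtain ⟨e, k, hk, hxy | hxy⟩ := this h.symm (by aesop)
    exacts [⟨e, k, hk, Or.inr hxy.symm⟩, ⟨e, k, hk, Or.inl hxy.symm⟩]
  rcases x with a | ⟨e, i⟩ <;> rcases y with b | ⟨f, j⟩
  · obtain ⟨rfl, hab⟩ : r = 1 ∧ G.Adj a b := h
    set d : G.Dart := ⟨(a, b), hab⟩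
    refine ⟨dartEdge d, 0, one_pos, ?_⟩
    rw [zero_add, edgeNode_zero, edgeNode_self one_pos]
    simp only [inl.injEq]
    rcases eq_edgeDart_or_eq_symm d with hd | hd
    exacts [Or.inl ⟨congrArg (·.fst) hd, congrArg (·.snd) hd⟩,
      Or.inr ⟨congrArg (·.fst) hd, congrArg (·.snd) hd⟩]
  · have := j.is_lt
    rcases h with ⟨rfl, hj⟩ | ⟨rfl, hj⟩
    · refine ⟨f, j, by omega, Or.inl ⟨?_, (edgeNode_succ f j).symm⟩⟩
      rw [hj, edgeNode_zero]
      rfl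
    · refine ⟨f, j + 1, by omega, Or.inr ⟨?_, (edgeNode_succ f j).symm⟩⟩
      rw [show (j : ℕ) + 1 + 1 = r by omega, edgeNode_self (by omega)]
      rfl
  · simp at hxy
  · have := j.is_lt
    obtain ⟨rfl, hij | hji⟩ := h
    · refine ⟨e, i + 1, by omega, Or.inl ⟨(edgeNode_succ e i).symm, ?_⟩⟩
      rw [hij, edgeNode_succ]
    · refine ⟨e, j + 1, by omega, Or.inr ⟨?_, (edgeNode_succ e j).symm⟩⟩
      rw [hji, edgeNode_succ]

lemma subdiv_adj_dartNode (d : G.Dart) {k : ℕ} (hk : k < r) :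
    (subdiv G r).Adj (dartNode r d k) (dartNode r d (k + 1)) := by
  obtain ⟨e, rfl | rfl⟩ := exists_eq_edgeDart d
  · rw [dartNode_edgeDart, dartNode_edgeDart]
    exact subdiv_adj_edgeNode e hk
  · rw [dartNode_edgeDart_symm, dartNode_edgeDart_symm, show r - k = r - (k + 1) + 1 by omega]
    exact (subdiv_adj_edgeNode e (by omega)).symm

noncomputable def subdivDart (p : G.Dart × Fin r) : (subdiv G r).Dart :=
  ⟨(dartNode r p.1 p.2, dartNode r p.1 (p.2 + 1)), subdiv_adj_dartNode p.1 p.2.is_lt⟩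

lemma subdivDart_symm (d : G.Dart) (i : Fin r) :
    (subdivDart (d, i)).symm = subdivDart (d.symm, i.rev) := by
  have := i.is_lt
  ext <;> simp only [subdivDart, Dart.symm_toProd, Prod.fst_swap, Prod.snd_swap, Fin.val_rev]
    <;> rw [dartNode_symm d (by omega)]
    <;> congr 1 <;> omega

lemma subdivDart_injective : Function.Injective (subdivDart (G := G) (r := r)) := by
  rintro ⟨d, k⟩ ⟨d', k'⟩ h
  have h1 : dartNode r d k = dartNode r d' k' := congrArg (·.fst) h
  have h2 : dartNode r d (k + 1) = dartNode r d' (k' + 1) := congrArg (·.snd) h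
  have := k.is_lt
  have := k'.is_lt
  have hd : d' = d ∨ d' = d.symm := by
    by_cases hr : r = 1
    · subst hr
      have hk : (k : ℕ) = 0 ∧ (k' : ℕ) = 0 := by omega
      rw [hk.1, hk.2, dartNode_zero one_pos, dartNode_zero one_pos] at h1
      rw [hk.1, hk.2, zero_add, dartNode_self one_pos, dartNode_self one_pos] at h2
      exact Or.inl (Dart.ext _ _ (Prod.ext (inl_injective h1.symm) (inl_injective h2.symm)))
    · rcases Nat.eq_zero_or_pos k with hk0 | hk0
      · have := (dartNode_eq_iff (k := k + 1) (by omega) (by omega) (by omega)).1 h2.symm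
        tauto
      · have := (dartNode_eq_iff hk0 k.is_lt (by omega)).1 h1.symm
        tauto
  rcases hd with rfl | rfl
  · rw [Fin.ext (dartNode_injOn _ k.is_lt.le k'.is_lt.le h1)]
  · rw [dartNode_symm d (by omega)] at h1 h2
    have := dartNode_injOn d (Set.mem_Iic.2 (by omega)) (Set.mem_Iic.2 (by omega)) h1
    have := dartNode_injOn d (Set.mem_Iic.2 (by omega)) (Set.mem_Iic.2 (by omega)) h2
    omega

lemma subdivDart_surjective : Function.Surjective (subdivDart (G := G) (r := r)) := by
  rintro ⟨⟨x, y⟩, h⟩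
  obtain ⟨e, k, hk, ⟨rfl, rfl⟩ | ⟨rfl, rfl⟩⟩ := exists_edgeNode_of_subdiv_adj h
  · exact ⟨(edgeDart e, ⟨k, hk⟩), by ext <;> simp [subdivDart, dartNode_edgeDart]⟩
  · refine ⟨((edgeDart e).symm, ⟨r - 1 - k, by omega⟩), ?_⟩
    ext <;> simp only [subdivDart, dartNode_edgeDart_symm] <;> congr 1 <;> omega

lemma subdivDart_snd_eq_fst_and_ne_symm_iff (d e : G.Dart) (i j : Fin r) :
    (subdivDart (e, j)).snd = (subdivDart (d, i)).fst ∧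
        subdivDart (e, j) ≠ (subdivDart (d, i)).symm ↔
      d = e ∧ (j : ℕ) + 1 = i ∨
        ((i : ℕ) = 0 ∧ (j : ℕ) + 1 = r) ∧ (e.snd = d.fst ∧ e ≠ d.symm) := by
  have := i.is_lt
  have := j.is_lt
  have hr : 0 < r := by omega
  rw [subdivDart_symm, Ne, subdivDart_injective.eq_iff]
  simp only [subdivDart, Prod.ext_iff, Fin.ext_iff, Fin.val_rev]
  rcases Nat.eq_zero_or_pos i with hi | hi
  · rw [hi, dartNode_zero hr]
    by_cases hj : (j : ℕ) + 1 = r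
    · rw [hj, dartNode_self hr]
      simp [show (j : ℕ) = r - 1 by omega, hr.ne']
    · have : dartNode r e (j + 1) ≠ inl d.fst := by
        rw [← dartNode_zero hr d]
        intro h
        have := (dartNode_eq_iff (by omega) (by omega) (by omega)).1 h.symm
        omega
      simp [this, hj]
  · rw [dartNode_eq_iff hi i.is_lt (by omega)]
    constructor
    · rintro ⟨⟨rfl, h⟩ | ⟨rfl, h⟩, hn⟩
      exacts [Or.inl ⟨rfl, h⟩, (hn ⟨rfl, by omega⟩).elim]
    · rintro (⟨rfl, h⟩ | ⟨⟨h, -⟩, -⟩)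
      exacts [⟨Or.inl ⟨rfl, h⟩, fun h' => d.symm_ne h'.1.symm⟩, by omega]

noncomputable def subdivDartEquiv : G.Dart × Fin r ≃ (subdiv G r).Dart :=
  Equiv.ofBijective subdivDart ⟨subdivDart_injective, subdivDart_surjective⟩

end Subdiv

section NonBacktracking

variable {V : Type} [Fintype V] [DecidableEq V] {G : SimpleGraph V} [DecidableRel G.Adj]

lemma nbMatrix_apply_s15 (x y : G.Dart) :
    nbMatrix G x y = if y.snd = x.fst ∧ y ≠ x.symm then 1 else 0 :=
  if_congr ⟨fun h => ⟨h.1, fun hy => h.2 (congrArg (·.fst) hy)⟩,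
    fun h => ⟨h.1, fun hy => h.2 (Dart.ext _ _ (Prod.ext hy h.1))⟩⟩ rfl rfl

variable {r : ℕ}

lemma nbMatrix_subdiv_subdivDart (p q : G.Dart × Fin r) :
    nbMatrix (subdiv G r) (subdivDart p) (subdivDart q) = blockCompanion (nbMatrix G) r p q := by
  obtain ⟨d, i⟩ := p
  obtain ⟨e, j⟩ := q
  simp only [nbMatrix_apply_s15, subdivDart_snd_eq_fst_and_ne_symm_iff, blockCompanion, of_apply]
  split_ifs <;> simp_all

lemma nbMatrix_subdiv : nbMatrix (subdiv G r) =
    reindex subdivDartEquiv subdivDartEquiv (blockCompanion (nbMatrix G) r) := by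
  ext x y
  obtain ⟨p, rfl⟩ := subdivDartEquiv.surjective x
  obtain ⟨q, rfl⟩ := subdivDartEquiv.surjective y
  rw [reindex_apply, submatrix_apply, Equiv.symm_apply_apply, Equiv.symm_apply_apply]
  exact nbMatrix_subdiv_subdivDart p q

end NonBacktracking

/-- If H is the r-subdivision of G then det(tI − B_H) = det(t^r I − B_G); in particular the
non-backtracking eigenvalues of H are exactly the r-th roots of those of G. -/
theorem charpoly_subdiv {V : Type} [Fintype V] [DecidableEq V]
    (G : SimpleGraph V) [DecidableRel G.Adj] (r : ℕ) (hr : 1 ≤ r) :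
    (nbMatrix (subdiv G r)).charpoly = (nbMatrix G).charpoly.comp (Polynomial.X ^ r) ∧
    ∀ mu : ℂ, (nbMatrix (subdiv G r)).charpoly.IsRoot mu ↔
      (nbMatrix G).charpoly.IsRoot (mu ^ r) := by
  have h : (nbMatrix (subdiv G r)).charpoly = (nbMatrix G).charpoly.comp (X ^ r) := by
    rw [nbMatrix_subdiv, charpoly_reindex, charpoly_blockCompanion _ hr]
  refine ⟨h, fun mu => ?_⟩
  rw [h, IsRoot.def, IsRoot.def, eval_comp, eval_pow, eval_X]
end
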